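/- Let n, m ∈ ℕ with m ≥ 2, let I : Fin n → ℝ, W, W' : Fin n → Fin m → ℝ and b, b' : Fin m → ℝ. Suppose that for every choice of target indices (i₀, j₀) with I_{i₀} ≠ 0 and for every bias index j₀, the pairs (correct softmax output, SNIFF-faulted softmax output at coordinate j₀) produced by the parameters (W, b) and by (W', b') coincide, where the pre-activations are y_j = b_j + Σ_i I_i W_{i,j}, the softmax is z_j = exp(y_j)/Σ_{j'} exp(y_{j'}), a bias SNIFF replaces y_{j₀} by y_{j₀} − 2 b_{j₀}, and a weight SNIFF replaces y_{j₀} by y_{j₀} − 2 I_{i₀} W_{i₀,j₀}. Then b_{j₀} = b'_{j₀} for all j₀, and W_{i₀,j₀} = W'_{i₀,j₀} for all (i₀, j₀) with I_{i₀} ≠ 0. -/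

import Mathlib

/-!
A SNIFF subtracts a shift `δ` from the targeted pre-activation and nothing else. The log-odds
`log (z / (1 - z))` of a softmax coordinate equals that pre-activation minus the log of the
exponential mass of the other coordinates, which the fault does not touch. Comparing the log-odds
of the correct and the faulted outputs therefore reads off `δ` exactly, hence `2 b j₀` and
`2 I i₀ W i₀ j₀`.
-/

open Real Finset

/-- Pre-activations of the last layer: `y j = b j + ∑ i, I i * W i j`. -/
noncomputable def preact {n m : ℕ} (I : Fin n → ℝ) (W : Fin n → Fin m → ℝ)
    (b : Fin m → ℝ) (j : Fin m) : ℝ :=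
  b j + ∑ i, I i * W i j

/-- Softmax output at coordinate `j`. -/
noncomputable def softmaxAt {m : ℕ} (y : Fin m → ℝ) (j : Fin m) : ℝ :=
  Real.exp (y j) / ∑ j' : Fin m, Real.exp (y j')

section LogOdds

variable {m : ℕ} [Nontrivial (Fin m)]

lemma sum_erase_exp_pos (y : Fin m → ℝ) (j : Fin m) :
    0 < ∑ k ∈ univ.erase j, exp (y k) := by
  obtain ⟨k, hk⟩ := exists_ne j
  exact sum_pos (fun _ _ ↦ exp_pos _) ⟨k, mem_erase.2 ⟨hk, mem_univ k⟩⟩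

lemma log_softmaxAt_odds (y : Fin m → ℝ) (j : Fin m) :
    log (softmaxAt y j / (1 - softmaxAt y j)) = y j - log (∑ k ∈ univ.erase j, exp (y k)) := by
  have hT := sum_erase_exp_pos y j
  have ha := exp_pos (y j)
  have hodds : softmaxAt y j / (1 - softmaxAt y j) = exp (y j) / ∑ k ∈ univ.erase j, exp (y k) := by
    rw [softmaxAt, ← add_sum_erase _ _ (mem_univ j)]
    have hsum : exp (y j) + ∑ k ∈ univ.erase j, exp (y k) ≠ 0 := by positivity
    rw [one_sub_div hsum, add_sub_cancel_left, div_div_div_cancel_right₀ hsum]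
  rw [hodds, log_div ha.ne' hT.ne', log_exp]

lemma log_softmaxAt_odds_update (y : Fin m → ℝ) (j : Fin m) (x : ℝ) :
    log (softmaxAt (Function.update y j x) j / (1 - softmaxAt (Function.update y j x) j)) =
      x - log (∑ k ∈ univ.erase j, exp (y k)) := by
  rw [log_softmaxAt_odds, Function.update_self]
  congr 2
  exact sum_congr rfl fun k hk ↦ by rw [Function.update_of_ne (ne_of_mem_erase hk)]

theorem shift_eq_of_softmaxAt_eq (y y' : Fin m → ℝ) (j : Fin m) {δ δ' : ℝ}
    (hcorrect : softmaxAt y j = softmaxAt y' j)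
    (hfault : softmaxAt (Function.update y j (y j - δ)) j =
      softmaxAt (Function.update y' j (y' j - δ')) j) :
    δ = δ' := by
  have hcorrect' := congrArg (fun z ↦ log (z / (1 - z))) hcorrect
  have hfault' := congrArg (fun z ↦ log (z / (1 - z))) hfault
  rw [log_softmaxAt_odds, log_softmaxAt_odds] at hcorrect'
  rw [log_softmaxAt_odds_update, log_softmaxAt_odds_update] at hfault'
  linarith

end LogOdds

/-- Exact-extraction guarantee of the SNIFF attack: if the parameter sets
`(W, b)` and `(W', b')` produce the same pairs (correct softmax output at `j₀`,
SNIFF-faulted softmax output at `j₀`) for every bias index `j₀` (bias SNIFF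
replacing `y j₀` by `y j₀ - 2 * b j₀`) and for every target pair `(i₀, j₀)`
with `I i₀ ≠ 0` (weight SNIFF replacing `y j₀` by `y j₀ - 2 * I i₀ * W i₀ j₀`),
then all biases agree and all weights with nonzero input coordinate agree. -/
theorem sniff_exact_extraction
    (n m : ℕ) (hm : 2 ≤ m) (I : Fin n → ℝ)
    (W W' : Fin n → Fin m → ℝ) (b b' : Fin m → ℝ)
    (hcorrect : ∀ j₀ : Fin m,
      softmaxAt (preact I W b) j₀ = softmaxAt (preact I W' b') j₀)
    (hbias : ∀ j₀ : Fin m,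
      softmaxAt (Function.update (preact I W b) j₀ (preact I W b j₀ - 2 * b j₀)) j₀ =
      softmaxAt (Function.update (preact I W' b') j₀ (preact I W' b' j₀ - 2 * b' j₀)) j₀)
    (hweight : ∀ (i₀ : Fin n) (j₀ : Fin m), I i₀ ≠ 0 →
      softmaxAt (Function.update (preact I W b) j₀
        (preact I W b j₀ - 2 * I i₀ * W i₀ j₀)) j₀ =
      softmaxAt (Function.update (preact I W' b') j₀
        (preact I W' b' j₀ - 2 * I i₀ * W' i₀ j₀)) j₀) :
    (∀ j₀ : Fin m, b j₀ = b' j₀) ∧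
    (∀ (i₀ : Fin n) (j₀ : Fin m), I i₀ ≠ 0 → W i₀ j₀ = W' i₀ j₀) := by
  have : Nontrivial (Fin m) := Fin.nontrivial_iff_two_le.mpr hm
  refine ⟨fun j₀ ↦ ?_, fun i₀ j₀ hI ↦ ?_⟩
  · have h := shift_eq_of_softmaxAt_eq _ _ j₀ (hcorrect j₀) (hbias j₀)
    linarith
  · have h := shift_eq_of_softmaxAt_eq _ _ j₀ (hcorrect j₀) (hweight i₀ j₀ hI)
    exact mul_left_cancel₀ (mul_ne_zero two_ne_zero hI) h
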